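/- With h = (x + y·f)/z as above and |z|·ε < 1, the index (codimension as F_q-vector spaces) of z·Λ_{|y|^{−1}ε}(f) in Λ_ε(h) is bounded by a constant depending only on y and z (independent of ε); in fact it is bounded by dim_{F_q}( (y^{−1}A)² / (zA)² ) = 2·(deg y + deg z). -/

import Mathlib

/-!
Since `y λ f = z (λ h) - x λ`, multiplication by `y` maps `Λ_ε(h)` into `Λ_{|z|ε}(f) ⊆ Λ_1(f)`.
On `Λ_1(f)` the polynomial `λ^⊥` nearest to `λ f` is unique, because `A` has no nonzero element
of absolute value `< 1`, hence (ultrametric inequality) `λ ↦ λ^⊥` is `F_q`-linear. So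
`λ ↦ (y λ, (y λ)^⊥) mod y z` is a linear map `Λ_ε(h) → (A / y z A)²`, a space of dimension
`2 (deg y + deg z)`, and an element of its kernel is `z μ` with `y z (μ f - μ^⊥)` of absolute
value `< |z| ε`, i.e. `μ ∈ Λ_{|y|⁻¹ε}(f)`.
-/

open Polynomial

/-- `‖x‖`: distance from `x ∈ K` to the nearest element of `A = F_q[T]`. -/
noncomputable def pnorm {Fq K : Type*} [Field Fq] [Field K]
    (ι : Polynomial Fq →+* K) (v : AbsoluteValue K ℝ) (x : K) : ℝ :=
  sInf (Set.range fun p : Polynomial Fq => v (x - ι p))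

/-- `Λ_δ(g) = { λ ∈ A : ‖λg‖ < δ }`. -/
def Lambda {Fq K : Type*} [Field Fq] [Field K]
    (ι : Polynomial Fq →+* K) (v : AbsoluteValue K ℝ) (g : K) (δ : ℝ) :
    Set (Polynomial Fq) :=
  {p | pnorm ι v (ι p * g) < δ}

theorem finrank_quotient_le_of_ker_le {R M W : Type*} [DivisionRing R] [AddCommGroup M]
    [Module R M] [AddCommGroup W] [Module R W] [FiniteDimensional R W] (Φ : M →ₗ[R] W)
    {N : Submodule R M} (hN : LinearMap.ker Φ ≤ N) :
    Module.finrank R (M ⧸ N) ≤ Module.finrank R W := by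
  have hinj : Function.Injective ((LinearMap.ker Φ).liftQ Φ le_rfl) :=
    LinearMap.ker_eq_bot.mp (Submodule.ker_liftQ_eq_bot _ _ _ le_rfl)
  have : FiniteDimensional R (M ⧸ LinearMap.ker Φ) := Module.Finite.of_injective _ hinj
  exact (LinearMap.finrank_le_finrank_of_surjective (Submodule.factor_surjective hN)).trans
    (LinearMap.finrank_le_finrank_of_injective hinj)

section pnorm

variable {Fq K : Type*} [Field Fq] [Field K] (ι : Fq[X] →+* K) (v : AbsoluteValue K ℝ)

theorem pnorm_nonneg (x : K) : 0 ≤ pnorm ι v x :=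
  Real.sInf_nonneg (by rintro r ⟨p, rfl⟩; exact v.nonneg _)

theorem pnorm_le (x : K) (p : Fq[X]) : pnorm ι v x ≤ v (x - ι p) :=
  csInf_le ⟨0, by rintro r ⟨q, rfl⟩; exact v.nonneg _⟩ ⟨p, rfl⟩

theorem exists_sub_lt_of_pnorm_lt {x : K} {δ : ℝ} (hx : pnorm ι v x < δ) :
    ∃ p : Fq[X], v (x - ι p) < δ := by
  obtain ⟨r, ⟨p, rfl⟩, hr⟩ := exists_lt_of_csInf_lt (Set.range_nonempty _) hx
  exact ⟨p, hr⟩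

theorem pnorm_zero : pnorm ι v 0 = 0 :=
  le_antisymm ((pnorm_le ι v 0 0).trans_eq (by simp)) (pnorm_nonneg ι v 0)

theorem pnorm_map_add (p : Fq[X]) (x : K) : pnorm ι v (ι p + x) = pnorm ι v x := by
  unfold pnorm
  rw [← (Equiv.addLeft p).surjective.range_comp]
  simp [Function.comp_def]

theorem pnorm_map_mul_le (p : Fq[X]) (x : K) : pnorm ι v (ι p * x) ≤ v (ι p) * pnorm ι v x := by
  change _ ≤ v (ι p) * ⨅ r, v (x - ι r)
  rw [Real.mul_iInf_of_nonneg (v.nonneg _)]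
  refine le_ciInf fun r => (pnorm_le ι v _ (p * r)).trans_eq ?_
  rw [map_mul, ← mul_sub, map_mul]

theorem Lambda_eq_empty (g : K) {δ : ℝ} (hδ : δ ≤ 0) : Lambda ι v g δ = ∅ :=
  Set.eq_empty_of_forall_notMem fun _ hp => (hδ.trans (pnorm_nonneg ι v _)).not_gt hp

theorem mul_mem_Lambda_of_mem {f h : K} {x y z t : Fq[X]} (hz : ι z ≠ 0)
    (hh : ι z * h = ι x + ι y * f) {δ : ℝ} (ht : t ∈ Lambda ι v h δ) :
    y * t ∈ Lambda ι v f (v (ι z) * δ) := by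
  have hyt : ι (y * t) * f = ι (-(x * t)) + ι z * (ι t * h) := by
    simp only [map_mul, map_neg]
    linear_combination (-ι t) * hh
  change pnorm ι v (ι (y * t) * f) < _
  rw [hyt, pnorm_map_add]
  exact (pnorm_map_mul_le ι v z _).trans_lt (mul_lt_mul_of_pos_left ht (v.pos hz))

open Classical in
/-- An element of `A` within distance `1` of `x` (unique when `A` is discrete), or `0` if there is
none; the paper's `λ^⊥` is `nearest ι v (ι λ * f)`. -/
noncomputable def nearest (x : K) : Fq[X] :=
  if hx : ∃ p : Fq[X], v (x - ι p) < 1 then hx.choose else 0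

structure IsDiscreteUltrametric : Prop where
  isNonarchimedean : IsNonarchimedean v
  map_C_le_one : ∀ c : Fq, v (ι (C c)) ≤ 1
  eq_zero_of_lt_one : ∀ p : Fq[X], v (ι p) < 1 → p = 0

end pnorm

namespace IsDiscreteUltrametric

variable {Fq K : Type*} [Field Fq] [Field K] {ι : Fq[X] →+* K} {v : AbsoluteValue K ℝ}

theorem of_map_eq_pow (hna : IsNonarchimedean v) {q : ℝ} (hq : 1 ≤ q)
    (hdeg : ∀ g : Fq[X], g ≠ 0 → v (ι g) = q ^ g.natDegree) : IsDiscreteUltrametric ι v where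
  isNonarchimedean := hna
  map_C_le_one c := by
    rcases eq_or_ne c 0 with rfl | hc
    · simp
    · rw [hdeg _ (C_ne_zero.2 hc), natDegree_C, pow_zero]
  eq_zero_of_lt_one p hp := by
    by_contra hp0
    exact (one_le_pow₀ hq).not_gt (hdeg p hp0 ▸ hp)

variable (hv : IsDiscreteUltrametric ι v)
include hv

theorem map_add_lt {a b : K} {δ : ℝ} (ha : v a < δ) (hb : v b < δ) : v (a + b) < δ :=
  (hv.isNonarchimedean a b).trans_lt (max_lt ha hb)

theorem map_sub_lt {a b : K} {δ : ℝ} (ha : v a < δ) (hb : v b < δ) : v (a - b) < δ := by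
  rw [sub_eq_add_neg]
  exact hv.map_add_lt ha (by rwa [v.map_neg])

theorem pnorm_C_mul_le (c : Fq) (x : K) : pnorm ι v (ι (C c) * x) ≤ pnorm ι v x :=
  (pnorm_map_mul_le ι v _ x).trans (mul_le_of_le_one_left (pnorm_nonneg ι v x) (hv.map_C_le_one c))

theorem add_mem_Lambda {g : K} {δ : ℝ} {p p' : Fq[X]} (hp : p ∈ Lambda ι v g δ)
    (hp' : p' ∈ Lambda ι v g δ) : p + p' ∈ Lambda ι v g δ := by
  obtain ⟨r, hr⟩ := exists_sub_lt_of_pnorm_lt ι v hp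
  obtain ⟨r', hr'⟩ := exists_sub_lt_of_pnorm_lt ι v hp'
  calc pnorm ι v (ι (p + p') * g) ≤ v (ι (p + p') * g - ι (r + r')) := pnorm_le ι v _ _
    _ = v ((ι p * g - ι r) + (ι p' * g - ι r')) := by congr 1; simp only [map_add]; ring
    _ < δ := hv.map_add_lt hr hr'

theorem smul_mem_Lambda {g : K} {δ : ℝ} (c : Fq) {p : Fq[X]} (hp : p ∈ Lambda ι v g δ) :
    c • p ∈ Lambda ι v g δ := by
  change pnorm ι v (ι (c • p) * g) < δ
  rw [smul_eq_C_mul, map_mul, mul_assoc]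
  exact (hv.pnorm_C_mul_le c _).trans_lt hp

theorem mem_span_Lambda {g : K} {δ : ℝ} (hδ : 0 < δ) {p : Fq[X]} :
    p ∈ Submodule.span Fq (Lambda ι v g δ) ↔ p ∈ Lambda ι v g δ := by
  refine ⟨fun hp => ?_, fun hp => Submodule.subset_span hp⟩
  induction hp using Submodule.span_induction with
  | mem _ h => exact h
  | zero => simpa [Lambda, pnorm_zero] using hδ
  | add _ _ _ _ h h' => exact hv.add_mem_Lambda h h'
  | smul c _ _ h => exact hv.smul_mem_Lambda c h

theorem nearest_eq {x : K} {p : Fq[X]} (hp : v (x - ι p) < 1) : nearest ι v x = p := by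
  have hx : ∃ p : Fq[X], v (x - ι p) < 1 := ⟨p, hp⟩
  rw [nearest, dif_pos hx]
  refine sub_eq_zero.mp (hv.eq_zero_of_lt_one _ ?_)
  rw [map_sub, ← sub_sub_sub_cancel_left _ _ x]
  exact hv.map_sub_lt hp hx.choose_spec

theorem sub_nearest_lt {x : K} {δ : ℝ} (hx : pnorm ι v x < δ) (hδ : δ ≤ 1) :
    v (x - ι (nearest ι v x)) < δ := by
  obtain ⟨p, hp⟩ := exists_sub_lt_of_pnorm_lt ι v hx
  rwa [hv.nearest_eq (hp.trans_le hδ)]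

theorem nearest_add {x x' : K} (hx : pnorm ι v x < 1) (hx' : pnorm ι v x' < 1) :
    nearest ι v (x + x') = nearest ι v x + nearest ι v x' :=
  hv.nearest_eq <| by
    rw [map_add, add_sub_add_comm]
    exact hv.map_add_lt (hv.sub_nearest_lt hx le_rfl) (hv.sub_nearest_lt hx' le_rfl)

theorem nearest_C_mul (c : Fq) {x : K} (hx : pnorm ι v x < 1) :
    nearest ι v (ι (C c) * x) = C c * nearest ι v x :=
  hv.nearest_eq <| by
    rw [map_mul, ← mul_sub, map_mul]
    exact (mul_le_of_le_one_left (v.nonneg _) (hv.map_C_le_one c)).trans_lt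
      (hv.sub_nearest_lt hx le_rfl)

noncomputable def perp (g : K) : Submodule.span Fq (Lambda ι v g 1) →ₗ[Fq] Fq[X] where
  toFun t := nearest ι v (ι t * g)
  map_add' t t' := by
    simp only [Submodule.coe_add, map_add, add_mul]
    exact hv.nearest_add ((hv.mem_span_Lambda one_pos).1 t.2) ((hv.mem_span_Lambda one_pos).1 t'.2)
  map_smul' c t := by
    simp only [SetLike.val_smul, smul_eq_C_mul, map_mul, mul_assoc, RingHom.id_apply]
    exact hv.nearest_C_mul c ((hv.mem_span_Lambda one_pos).1 t.2)

theorem mem_image_mul_Lambda {f h : K} {x y z t : Fq[X]} (hy : ι y ≠ 0) (hz : ι z ≠ 0)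
    (hh : ι z * h = ι x + ι y * f) {ε : ℝ} (hε : v (ι z) * ε ≤ 1) (ht : t ∈ Lambda ι v h ε)
    (hyt : y * z ∣ y * t) (hperp : y * z ∣ nearest ι v (ι (y * t) * f)) :
    t ∈ (z * ·) '' Lambda ι v f ((v (ι y))⁻¹ * ε) := by
  obtain ⟨μ, hμ⟩ := hyt
  obtain ⟨ν, hν⟩ := hperp
  have hy0 : y ≠ 0 := by rintro rfl; exact hy (map_zero ι)
  have htμ : t = z * μ := mul_left_cancel₀ hy0 (by rw [hμ, mul_assoc])
  refine ⟨μ, ?_, htμ.symm⟩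
  have hlt := hv.sub_nearest_lt (mul_mem_Lambda_of_mem ι v hz hh ht) hε
  rw [hν, hμ, show ι (y * z * μ) * f - ι (y * z * ν) = ι z * (ι y * (ι μ * f - ι ν)) by
    simp only [map_mul]; ring, map_mul, map_mul] at hlt
  refine (pnorm_le ι v _ ν).trans_lt ?_
  rw [inv_mul_eq_div, lt_div_iff₀' (v.pos hy)]
  exact lt_of_mul_lt_mul_left hlt (v.nonneg _)

end IsDiscreteUltrametric

theorem stmt_10_general {Fq K : Type*} [Field Fq] [Fintype Fq] [Field K]
    (ι : Polynomial Fq →+* K) (v : AbsoluteValue K ℝ)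
    (hna : ∀ x' y' : K, v (x' + y') ≤ max (v x') (v y'))
    (hdeg : ∀ g : Polynomial Fq, g ≠ 0 → v (ι g) = (Fintype.card Fq : ℝ) ^ g.natDegree)
    (f : K)
    (x y z : Polynomial Fq) (hy : y ≠ 0) (hz : z ≠ 0)
    (h : K) (hh : ι z * h = ι x + ι y * f)
    (ε : ℝ) (hε : (Fintype.card Fq : ℝ) ^ z.natDegree * ε < 1) :
    Module.finrank Fq
        (↥(Submodule.span Fq (Lambda ι v h ε)) ⧸
          Submodule.comap (Submodule.span Fq (Lambda ι v h ε)).subtype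
            (Submodule.span Fq
              ((z * ·) '' Lambda ι v f (((Fintype.card Fq : ℝ) ^ y.natDegree)⁻¹ * ε)))) ≤
      2 * (y.natDegree + z.natDegree) := by
  obtain hε0 | hε0 := le_or_gt ε 0
  · rw [Lambda_eq_empty ι v h hε0, Submodule.span_empty, Module.finrank_zero_of_subsingleton]
    exact Nat.zero_le _
  have hv : IsDiscreteUltrametric ι v :=
    .of_map_eq_pow hna (mod_cast Fintype.card_pos) hdeg
  have hιy : ι y ≠ 0 := v.ne_zero_iff.mp (by rw [hdeg y hy]; positivity)
  have hιz : ι z ≠ 0 := v.ne_zero_iff.mp (by rw [hdeg z hz]; positivity)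
  rw [← hdeg y hy]
  rw [← hdeg z hz] at hε
  set M := Submodule.span Fq (Lambda ι v h ε)
  have hmulY : M ≤ (Submodule.span Fq (Lambda ι v f 1)).comap (LinearMap.mulLeft Fq y) :=
    Submodule.span_le.2 fun t ht => Submodule.subset_span
      ((mul_mem_Lambda_of_mem ι v hιz hh ht).trans_le hε.le)
  let mk := (Ideal.Quotient.mkₐ Fq (Ideal.span {y * z})).toLinearMap
  let Φ : M →ₗ[Fq] (Fq[X] ⧸ Ideal.span {y * z}) × (Fq[X] ⧸ Ideal.span {y * z}) :=
    (mk ∘ₗ LinearMap.mulLeft Fq y ∘ₗ M.subtype).prod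
      (mk ∘ₗ hv.perp f ∘ₗ (LinearMap.mulLeft Fq y).restrict fun t ht => hmulY ht)
  have hker : LinearMap.ker Φ ≤
      (Submodule.span Fq ((z * ·) '' Lambda ι v f ((v (ι y))⁻¹ * ε))).comap M.subtype := by
    rintro ⟨t, ht⟩ hΦ
    obtain ⟨hyt, hperp⟩ := Prod.ext_iff.mp hΦ
    exact Submodule.subset_span (hv.mem_image_mul_Lambda hιy hιz hh hε.le
      ((hv.mem_span_Lambda hε0).1 ht) ((Ideal.Quotient.eq_zero_iff_dvd _ _).mp hyt)
      ((Ideal.Quotient.eq_zero_iff_dvd _ _).mp hperp))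
  have : Module.Finite Fq (Fq[X] ⧸ Ideal.span {y * z}) :=
    (AdjoinRoot.powerBasis (mul_ne_zero hy hz)).finite
  calc _ ≤ _ := finrank_quotient_le_of_ker_le Φ hker
    _ = 2 * (y.natDegree + z.natDegree) := by
      rw [Module.finrank_prod, finrank_quotient_span_eq_natDegree, natDegree_mul hy hz, two_mul]

/-- With `h = (x + y f)/z` and `|z| ε < 1`, the codimension of
`z Λ_{|y|⁻¹ε}(f)` in `Λ_ε(h)` (as `F_q`-vector spaces) is bounded by
`dim_{F_q}((y⁻¹A)²/(zA)²) = 2 (deg y + deg z)`, a constant independent of `ε`. -/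
theorem stmt_10 {Fq K : Type*} [Field Fq] [Fintype Fq] [Field K]
    (ι : Polynomial Fq →+* K) (v : AbsoluteValue K ℝ)
    (hna : ∀ x' y' : K, v (x' + y') ≤ max (v x') (v y'))
    (hdeg : ∀ g : Polynomial Fq, g ≠ 0 → v (ι g) = (Fintype.card Fq : ℝ) ^ g.natDegree)
    (a : Polynomial Fq) (hd : 0 < a.natDegree) (b : Fq) (hb : b ≠ 0)
    (f : K) (hroot : f ^ 2 = ι a * f + ι (C b))
    (x y z : Polynomial Fq) (hy : y ≠ 0) (hz : z ≠ 0)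
    (h : K) (hh : ι z * h = ι x + ι y * f)
    (ε : ℝ) (hε : (Fintype.card Fq : ℝ) ^ z.natDegree * ε < 1) :
    Module.finrank Fq
        (↥(Submodule.span Fq (Lambda ι v h ε)) ⧸
          Submodule.comap (Submodule.span Fq (Lambda ι v h ε)).subtype
            (Submodule.span Fq
              ((z * ·) '' Lambda ι v f (((Fintype.card Fq : ℝ) ^ y.natDegree)⁻¹ * ε)))) ≤
      2 * (y.natDegree + z.natDegree) :=
  stmt_10_general ι v hna hdeg f x y z hy hz h hh ε hε
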